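/- arXiv:0806.2222 — 2 statements merged into one kernel-verified Lean document; each statement's English description precedes it below -/
import Mathlib

section
/- Let 1 ≤ k ≤ n be integers and let ρ₀ ∈ Ω₀ be the step configuration ρ₀(x) := 1 if x ≤ k and 0 otherwise. Let m_1, …, m_N be any finite sequence of integers, and let j_1 < j_2 < ⋯ < j_r be exactly those indices j for which 1 ≤ m_j ≤ n−1. Then B_n R_k (J_{m_N} ∘ ⋯ ∘ J_{m_1})(ρ₀) = (J_{m_{j_r}} ∘ ⋯ ∘ J_{m_{j_1}})(B_n R_k ρ₀); that is, the result of applying all the jumps and then cutting off and pushing back equals the result of applying, in the same order, only the jumps at positions inside [1, n−1] to the pushed-back cut-off initial configuration. (Deterministic version of Lemma 3.3) -/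
open Set

/-- `Ω₀`: a configuration `ρ : ℤ → Bool` is admissible when its support
`{x : ℤ | ρ x = true}` is bounded above. -/
def BddSupport (ρ : ℤ → Bool) : Prop := BddAbove {x : ℤ | ρ x = true}

/-- The queue-length `S(ρ, x)`: the number of particles of `ρ` strictly to the right
of `x`. -/
noncomputable def qS (ρ : ℤ → Bool) (x : ℤ) : ℕ :=
  {y : ℤ | x < y ∧ ρ y = true}.ncard

/-- The cut-off operator `R_k`: keeps only the `k` rightmost particles. -/
noncomputable def Rk (k : ℕ) (ρ : ℤ → Bool) : ℤ → Bool :=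
  fun x => if qS ρ x < k then ρ x else false

/-- The push-back operator `B_n`: pushes all particles back into `(-∞, n]`,
preserving the exclusion. -/
noncomputable def Bn (n : ℤ) (ρ : ℤ → Bool) : ℤ → Bool :=
  fun x =>
    if n < x then false
    else if n - x < (qS ρ x : ℤ) then true
    else ρ x

/-- The jump operator `J_m`: exchanges the values of `ρ` at `m` and `m+1` if
`ρ(m) = 1` and `ρ(m+1) = 0`, and leaves `ρ` unchanged otherwise. -/
def Jm (m : ℤ) (ρ : ℤ → Bool) : ℤ → Bool :=
  fun x =>
    if ρ m = true ∧ ρ (m + 1) = false then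
      if x = m then ρ (m + 1) else if x = m + 1 then ρ m else ρ x
    else ρ x

/-! A configuration with support bounded above is determined by its height function
`h x = qS ρ x`. In these coordinates `R_k` and `B_n` are the pointwise minima with `k` and
with `(n - x)⁺`, while `J_m` only replaces `h m` by `min (h (m - 1)) (h (m + 1) + 1)`.
Hence `R_k` commutes with every jump, `B_n` commutes with the jumps at `m < n` and
absorbs those at `m ≥ n`. Finally, jumps never push `h` below the height `(k - x)⁺` of the
initial step, so `h m ≥ k` for `m ≤ 0`, and `R_k` removes the particle that would jump. -/

open Filter

namespace BddSupport

variable {ρ : ℤ → Bool}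

lemma finite_gt (hρ : BddSupport ρ) (x : ℤ) : {y : ℤ | x < y ∧ ρ y = true}.Finite := by
  obtain ⟨M, hM⟩ := hρ
  exact (Set.finite_Icc x M).subset fun y hy => ⟨hy.1.le, hM hy.2⟩

lemma Rk (hρ : BddSupport ρ) (k : ℕ) : BddSupport (Rk k ρ) :=
  hρ.mono fun x hx => by simp_all [_root_.Rk]

lemma Bn (ρ : ℤ → Bool) (n : ℤ) : BddSupport (Bn n ρ) :=
  (bddAbove_Iic (a := n)).mono fun x hx => by
    simp only [Set.mem_ofPred_eq, _root_.Bn] at hx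
    split_ifs at hx with h <;> exact not_lt.mp h

lemma Jm (hρ : BddSupport ρ) (m : ℤ) : BddSupport (Jm m ρ) :=
  (hρ.union (bddAbove_singleton (a := m + 1))).mono fun x hx => by
    simp only [Set.mem_ofPred_eq, _root_.Jm] at hx
    split_ifs at hx <;> simp_all

end BddSupport

section

variable {ρ σ : ℤ → Bool}

lemma qS_eventually_eq_zero (hρ : BddSupport ρ) : ∀ᶠ x in atTop, qS ρ x = 0 := by
  obtain ⟨M, hM⟩ := hρ
  filter_upwards [eventually_ge_atTop M] with x hx
  have hempty : {y : ℤ | x < y ∧ ρ y = true} = ∅ :=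
    Set.eq_empty_of_forall_notMem fun y hy => by linarith [hy.1, hM hy.2]
  rw [qS, hempty, Set.ncard_empty]

lemma qS_sub_one (hρ : BddSupport ρ) (x : ℤ) : qS ρ (x - 1) = (ρ x).toNat + qS ρ x := by
  have hext : ∀ y,
      (x - 1 < y ∧ ρ y = true) ↔ (y = x ∧ ρ x = true) ∨ (x < y ∧ ρ y = true) := by
    intro y
    constructor
    · rintro ⟨hy, hρy⟩
      rcases (show y = x ∨ x < y by omega) with rfl | h
      exacts [Or.inl ⟨rfl, hρy⟩, Or.inr ⟨h, hρy⟩]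
    · rintro (⟨rfl, hρy⟩ | ⟨hy, hρy⟩) <;> exact ⟨by omega, by assumption⟩
  cases hx : ρ x
  · simp only [hx, Bool.false_eq_true, and_false, false_or] at hext
    rw [qS, qS, Set.ext hext, Bool.toNat_false, zero_add]
  · simp only [hx, and_true] at hext
    rw [qS, qS, show {y | x - 1 < y ∧ ρ y = true} = insert x {y | x < y ∧ ρ y = true} from
      Set.ext hext, Set.ncard_insert_of_notMem (by simp) (hρ.finite_gt x)]
    simp [add_comm]

lemma eq_of_qS_eq (hρ : BddSupport ρ) (hσ : BddSupport σ) (h : ∀ x, qS ρ x = qS σ x) :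
    ρ = σ := by
  funext x
  have hx := qS_sub_one hρ x
  rw [h, h, qS_sub_one hσ x, add_left_inj] at hx
  cases hρx : ρ x <;> cases hσx : σ x <;> simp_all

lemma qS_eq_of_sub_one (hρ : BddSupport ρ) {F : ℤ → ℕ} (hF₀ : ∀ᶠ x in atTop, F x = 0)
    (hF : ∀ x, F (x - 1) = (ρ x).toNat + F x) (x : ℤ) : qS ρ x = F x := by
  obtain ⟨M, hM⟩ := eventually_atTop.mp ((qS_eventually_eq_zero hρ).and hF₀)
  rcases le_total M x with hx | hx
  · rw [(hM x hx).1, (hM x hx).2]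
  · induction x, hx using Int.leInductionDown with
    | base => rw [(hM M le_rfl).1, (hM M le_rfl).2]
    | pred y _ ih => rw [qS_sub_one hρ, hF, ih]

lemma qS_Rk (hρ : BddSupport ρ) (k : ℕ) (x : ℤ) : qS (Rk k ρ) x = min (qS ρ x) k := by
  refine qS_eq_of_sub_one (F := fun x => min (qS ρ x) k) (hρ.Rk k) ?_ (fun y => ?_) x
  · filter_upwards [qS_eventually_eq_zero hρ] with y hy
    simp [hy]
  · rw [qS_sub_one hρ, Rk]
    cases ρ y <;> split_ifs <;> simp <;> omega

lemma qS_Bn (hρ : BddSupport ρ) (n x : ℤ) : qS (Bn n ρ) x = min (qS ρ x) (n - x).toNat := by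
  refine qS_eq_of_sub_one (F := fun x => min (qS ρ x) (n - x).toNat) (BddSupport.Bn ρ n) ?_
    (fun y => ?_) x
  · filter_upwards [qS_eventually_eq_zero hρ] with y hy
    simp [hy]
  · rw [qS_sub_one hρ, Bn]
    cases ρ y <;> split_ifs <;> simp <;> omega

lemma qS_Jm (hρ : BddSupport ρ) (m x : ℤ) :
    qS (Jm m ρ) x = if x = m then min (qS ρ (m - 1)) (qS ρ (m + 1) + 1) else qS ρ x := by
  refine qS_eq_of_sub_one
    (F := fun x => if x = m then min (qS ρ (m - 1)) (qS ρ (m + 1) + 1) else qS ρ x) (hρ.Jm m) ?_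
    (fun y => ?_) x
  · filter_upwards [qS_eventually_eq_zero hρ, eventually_gt_atTop m] with y hy hym
    simp [hy, hym.ne']
  · have hm := qS_sub_one hρ m
    have hm₁ := qS_sub_one hρ (m + 1)
    rw [add_sub_cancel_right] at hm₁
    simp only [Jm]
    rcases eq_or_ne y m with rfl | hym
    · rw [if_neg (by omega), if_pos rfl, if_pos rfl]
      cases h₀ : ρ y <;> cases h₁ : ρ (y + 1) <;> simp [h₀, h₁] at hm hm₁ ⊢ <;> omega
    rcases eq_or_ne y (m + 1) with rfl | hym₁
    · rw [add_sub_cancel_right, if_pos rfl, if_neg hym, if_pos rfl]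
      cases h₀ : ρ m <;> cases h₁ : ρ (m + 1) <;> simp [h₀, h₁] at hm hm₁ ⊢ <;> omega
    · rw [if_neg (by omega), if_neg hym, if_neg hym, if_neg hym₁, ite_self, qS_sub_one hρ]

lemma Rk_Jm_comm (hρ : BddSupport ρ) (k : ℕ) (m : ℤ) : Rk k (Jm m ρ) = Jm m (Rk k ρ) :=
  eq_of_qS_eq ((hρ.Jm m).Rk k) ((hρ.Rk k).Jm m) fun x => by
    rw [qS_Rk (hρ.Jm m), qS_Jm hρ, qS_Jm (hρ.Rk k), qS_Rk hρ, qS_Rk hρ, qS_Rk hρ]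
    split_ifs <;> omega

lemma Bn_Jm_comm_of_lt (hρ : BddSupport ρ) {n m : ℤ} (hm : m < n) :
    Bn n (Jm m ρ) = Jm m (Bn n ρ) :=
  eq_of_qS_eq (BddSupport.Bn _ n) ((BddSupport.Bn ρ n).Jm m) fun x => by
    rw [qS_Bn (hρ.Jm m), qS_Jm hρ, qS_Jm (BddSupport.Bn ρ n), qS_Bn hρ, qS_Bn hρ, qS_Bn hρ]
    split_ifs with hx <;> omega

lemma Bn_Jm_of_le (hρ : BddSupport ρ) {n m : ℤ} (hm : n ≤ m) : Bn n (Jm m ρ) = Bn n ρ :=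
  eq_of_qS_eq (BddSupport.Bn _ n) (BddSupport.Bn ρ n) fun x => by
    rw [qS_Bn (hρ.Jm m), qS_Jm hρ, qS_Bn hρ]
    split_ifs with hx <;> omega

lemma Rk_eq_false_of_le_qS {k : ℕ} {x : ℤ} (hx : k ≤ qS ρ x) : Rk k ρ x = false := by
  simp [Rk, hx]

lemma Jm_eq_self_of_eq_false {m : ℤ} (hm : ρ m = false) : Jm m ρ = ρ :=
  funext fun x => by simp [Jm, hm]

lemma sub_le_qS_Jm {k : ℕ} (hρ : BddSupport ρ) (hρk : ∀ x, (k : ℤ) - x ≤ qS ρ x)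
    (m x : ℤ) :
    (k : ℤ) - x ≤ qS (Jm m ρ) x := by
  have := hρk (m - 1); have := hρk (m + 1); have := hρk x
  rw [qS_Jm hρ]
  split_ifs <;> omega

lemma Bn_Rk_Jm {n m : ℤ} {k : ℕ} (hρ : BddSupport ρ) (hρm : (k : ℤ) - m ≤ qS ρ m) :
    Bn n (Rk k (Jm m ρ)) =
      if 1 ≤ m ∧ m ≤ n - 1 then Jm m (Bn n (Rk k ρ)) else Bn n (Rk k ρ) := by
  rw [Rk_Jm_comm hρ]
  split_ifs with hm
  · exact Bn_Jm_comm_of_lt (hρ.Rk k) (by omega)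
  rcases le_or_gt n m with hnm | hm₀
  · exact Bn_Jm_of_le (hρ.Rk k) hnm
  · rw [Jm_eq_self_of_eq_false (Rk_eq_false_of_le_qS (by omega))]

lemma Bn_Rk_foldl_Jm_of_sub_le_qS {n : ℤ} {k : ℕ} (ms : List ℤ) (hρ : BddSupport ρ)
    (hρk : ∀ x, (k : ℤ) - x ≤ qS ρ x) :
    Bn n (Rk k (ms.foldl (fun ρ m => Jm m ρ) ρ))
      = (ms.filter (fun m => decide (1 ≤ m ∧ m ≤ n - 1))).foldl (fun ρ m => Jm m ρ)
          (Bn n (Rk k ρ)) := by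
  induction ms generalizing ρ with
  | nil => rfl
  | cons m ms ih =>
    rw [List.foldl_cons, List.filter_cons, ih (hρ.Jm m) (sub_le_qS_Jm hρ hρk m),
      Bn_Rk_Jm hρ (hρk m)]
    by_cases hm : 1 ≤ m ∧ m ≤ n - 1
    · rw [if_pos hm, if_pos (decide_eq_true hm), List.foldl_cons]
    · rw [if_neg hm, if_neg (by simpa using hm)]

end

lemma bddSupport_step (k : ℤ) : BddSupport (fun x => decide (x ≤ k)) :=
  ⟨k, fun x hx => by simpa using hx⟩

lemma qS_step (k x : ℤ) : qS (fun x => decide (x ≤ k)) x = (k - x).toNat := by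
  refine qS_eq_of_sub_one (F := fun x => (k - x).toNat) (bddSupport_step k) ?_ (fun y => ?_) x
  · filter_upwards [eventually_ge_atTop k] with y hy
    omega
  · by_cases hy : y ≤ k <;> simp [hy] <;> omega

theorem Bn_Rk_foldl_Jm_general (n : ℤ) (k : ℕ)
    (ms : List ℤ) :
    Bn n (Rk k (ms.foldl (fun ρ m => Jm m ρ) (fun x => decide (x ≤ (k : ℤ)))))
      = (ms.filter (fun m => decide (1 ≤ m ∧ m ≤ n - 1))).foldl
          (fun ρ m => Jm m ρ)
          (Bn n (Rk k (fun x => decide (x ≤ (k : ℤ))))) :=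
  Bn_Rk_foldl_Jm_of_sub_le_qS ms (bddSupport_step k) fun x => by rw [qS_step]; omega

/-- Deterministic version of Lemma 3.3: starting from the step configuration
`ρ₀ = 1_{(-∞, k]}` (with `1 ≤ k ≤ n`), applying any finite sequence of jump operators
`J_{m_1}, …, J_{m_N}` and then `R_k` and `B_n` gives the same result as applying, in
the same order, only those jumps with locations in `[1, n-1]` to `B_n R_k ρ₀`. -/
theorem Bn_Rk_foldl_Jm (n : ℤ) (k : ℕ) (hk : 1 ≤ k) (hkn : (k : ℤ) ≤ n)
    (ms : List ℤ) :
    Bn n (Rk k (ms.foldl (fun ρ m => Jm m ρ) (fun x => decide (x ≤ (k : ℤ)))))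
      = (ms.filter (fun m => decide (1 ≤ m ∧ m ≤ n - 1))).foldl
          (fun ρ m => Jm m ρ)
          (Bn n (Rk k (fun x => decide (x ≤ (k : ℤ))))) :=
  Bn_Rk_foldl_Jm_general n k ms
end

section
/- Let ρ, ρ' ∈ Ω₀ be compatible configurations, let k ≥ 1 be an integer, and assume ρ has at least k particles. Then the pair R_k ρ, R_{k−1} ρ' is compatible, and its second-class particle is at position Σ_{R_k ρ, R_{k−1} ρ'} = max(Σ_{ρ,ρ'}, π_ρ(k)). (Lemma 7.1, equation (17)) -/
open Set

/-- Two configurations `ρ, ρ'` are compatible with second-class particle at `x` if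
they differ exactly at `x`, where `ρ(x) = 1` and `ρ'(x) = 0`. -/
def Compat (ρ ρ' : ℤ → Bool) (x : ℤ) : Prop :=
  ρ x = true ∧ ρ' x = false ∧ ∀ y : ℤ, y ≠ x → ρ y = ρ' y

/-- `IsKthParticle ρ k p` says that `p` is the position of the `k`-th rightmost
particle of `ρ` (for `k ≥ 1`): `ρ(p) = 1` and there are exactly `k - 1` particles
strictly to the right of `p`.  In particular its existence expresses that `ρ` has at
least `k` particles. -/
def IsKthParticle (ρ : ℤ → Bool) (k : ℕ) (p : ℤ) : Prop :=
  ρ p = true ∧ qS ρ p = k - 1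

/-- `IsKthHole ρ n j t` says that `t = θ_ρ(n, j)`, the position of the `j`-th
rightmost hole of `ρ` in `(-∞, n]`; by convention `θ_ρ(n, 0) = n + 1`. -/
def IsKthHole (ρ : ℤ → Bool) (n : ℤ) (j : ℕ) (t : ℤ) : Prop :=
  if j = 0 then t = n + 1
  else t ≤ n ∧ ρ t = false ∧ {y : ℤ | t < y ∧ y ≤ n ∧ ρ y = false}.ncard = j - 1


lemma qS_finite (ρ : ℤ → Bool) (hρ : BddSupport ρ) (a : ℤ) :
    {y : ℤ | a < y ∧ ρ y = true}.Finite := by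
  obtain ⟨M, hM⟩ := hρ
  apply (Set.finite_Ioc a M).subset
  rintro y ⟨h1, h2⟩
  exact ⟨h1, hM h2⟩

lemma qS_mono (ρ : ℤ → Bool) (hρ : BddSupport ρ) {a b : ℤ} (h : a ≤ b) :
    qS ρ b ≤ qS ρ a := by
  apply Set.ncard_le_ncard _ (qS_finite ρ hρ a)
  rintro y ⟨h1, h2⟩
  exact ⟨lt_of_le_of_lt h h1, h2⟩

lemma qS_strict (ρ : ℤ → Bool) (hρ : BddSupport ρ) {a b : ℤ} (h : a < b)
    (hb : ρ b = true) : qS ρ b + 1 ≤ qS ρ a := by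
  have hsub : insert b {y : ℤ | b < y ∧ ρ y = true} ⊆ {y : ℤ | a < y ∧ ρ y = true} := by
    rintro y (rfl | ⟨h1, h2⟩)
    · exact ⟨h, hb⟩
    · exact ⟨h.trans h1, h2⟩
  have hnm : b ∉ {y : ℤ | b < y ∧ ρ y = true} := fun ⟨h1, _⟩ => lt_irrefl b h1
  calc qS ρ b + 1 = (insert b {y : ℤ | b < y ∧ ρ y = true}).ncard := by
        rw [Set.ncard_insert_of_notMem hnm (qS_finite ρ hρ b)]; rfl
    _ ≤ qS ρ a := Set.ncard_le_ncard hsub (qS_finite ρ hρ a)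

lemma qS_compat_ge (ρ ρ' : ℤ → Bool) (x : ℤ) (hc : Compat ρ ρ' x) {a : ℤ}
    (h : x ≤ a) : qS ρ' a = qS ρ a := by
  unfold qS
  congr 1
  ext y
  have hne : ∀ y : ℤ, a < y → y ≠ x := by intro y hy; omega
  constructor
  · rintro ⟨h1, h2⟩
    exact ⟨h1, (hc.2.2 y (hne y h1)).trans h2⟩
  · rintro ⟨h1, h2⟩
    exact ⟨h1, (hc.2.2 y (hne y h1)).symm.trans h2⟩

lemma qS_compat_lt (ρ ρ' : ℤ → Bool) (hρ' : BddSupport ρ') (x : ℤ)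
    (hc : Compat ρ ρ' x) {a : ℤ} (h : a < x) : qS ρ a = qS ρ' a + 1 := by
  have hset : {y : ℤ | a < y ∧ ρ y = true} = insert x {y : ℤ | a < y ∧ ρ' y = true} := by
    ext y
    constructor
    · rintro ⟨h1, h2⟩
      by_cases hy : y = x
      · exact Or.inl hy
      · exact Or.inr ⟨h1, (hc.2.2 y hy).symm.trans h2⟩
    · rintro (rfl | ⟨h1, h2⟩)
      · exact ⟨h, hc.1⟩
      · refine ⟨h1, ?_⟩
        by_cases hy : y = x
        · subst hy; exact hc.1
        · exact (hc.2.2 y hy).trans h2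
  have hnm : x ∉ {y : ℤ | a < y ∧ ρ' y = true} := by
    rintro ⟨_, h2⟩
    rw [hc.2.1] at h2
    exact Bool.false_ne_true h2
  unfold qS
  rw [hset, Set.ncard_insert_of_notMem hnm (qS_finite ρ' hρ' a)]

/-- Lemma 7.1, equation (17): if `ρ, ρ'` are compatible with second-class particle at
`Σ = x`, `k ≥ 1`, and `ρ` has at least `k` particles, the `k`-th rightmost being at
`p = π_ρ(k)`, then `R_k ρ` and `R_{k-1} ρ'` are compatible with second-class particle
at `max(x, π_ρ(k))`. -/
theorem compat_Rk (ρ ρ' : ℤ → Bool) (hρ : BddSupport ρ) (hρ' : BddSupport ρ')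
    (x : ℤ) (hc : Compat ρ ρ' x) (k : ℕ) (hk : 1 ≤ k)
    (p : ℤ) (hp : IsKthParticle ρ k p) :
    Compat (Rk k ρ) (Rk (k - 1) ρ') (max x p) := by
  obtain ⟨hx, hx', heq⟩ := hc
  obtain ⟨hpp, hqp⟩ := hp
  have hc : Compat ρ ρ' x := ⟨hx, hx', heq⟩
  refine ⟨?_, ?_, ?_⟩
  · -- `Rk k ρ (max x p) = true`
    have h1 : qS ρ (max x p) ≤ k - 1 := hqp ▸ qS_mono ρ hρ (le_max_right x p)
    have h2 : qS ρ (max x p) < k := by omega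
    have h3 : ρ (max x p) = true := by
      rcases max_cases x p with ⟨h, _⟩ | ⟨h, _⟩ <;> rw [h] <;> assumption
    simp [Rk, h2, h3]
  · -- `Rk (k-1) ρ' (max x p) = false`
    rcases le_or_gt p x with h | h
    · rw [max_eq_left h]
      simp [Rk, hx']
    · rw [max_eq_right h.le]
      have h1 : qS ρ' p = qS ρ p := qS_compat_ge ρ ρ' x hc h.le
      have h2 : ¬ qS ρ' p < k - 1 := by omega
      simp [Rk, h2]
  · intro y hy
    show (if qS ρ y < k then ρ y else false) = (if qS ρ' y < k - 1 then ρ' y else false)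
    by_cases hρy : ρ y = true
    · by_cases hyx : y = x
      · -- y = x, and x ≠ max x p so x < p
        subst hyx
        have hxp : y < p := by
          by_contra hno
          push_neg at hno
          exact hy (max_eq_left hno).symm
        have h1 : qS ρ p + 1 ≤ qS ρ y := qS_strict ρ hρ hxp hpp
        have h2 : ¬ qS ρ y < k := by omega
        simp [Rk, h2, hx']
      · have hρ'y : ρ' y = true := (heq y hyx) ▸ hρy
        rcases lt_or_ge y p with hyp | hyp
        · -- y < p : both cut off
          have h1 : qS ρ p + 1 ≤ qS ρ y := qS_strict ρ hρ hyp hpp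
          have h2 : ¬ qS ρ y < k := by omega
          rcases lt_or_ge y x with hxy | hxy
          · have h3 : qS ρ y = qS ρ' y + 1 := qS_compat_lt ρ ρ' hρ' x hc hxy
            have h4 : ¬ qS ρ' y < k - 1 := by omega
            simp [h2, h4]
          · have h3 : qS ρ' y = qS ρ y := qS_compat_ge ρ ρ' x hc hxy
            have h4 : ¬ qS ρ' y < k - 1 := by omega
            simp [h2, h4]
        · -- p ≤ y : both kept
          rcases le_or_gt x p with hxp | hxp
          · -- max = p, so y > p
            have hyp' : p < y := by
              by_contra hno
              push_neg at hno
              have hyeq : y = p := le_antisymm hno hyp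
              exact hy (by rw [hyeq, max_eq_right hxp])
            have h1 : qS ρ y + 1 ≤ qS ρ p := qS_strict ρ hρ hyp' hρy
            have h2 : qS ρ y < k := by omega
            have hxy : x < y := lt_of_le_of_lt hxp hyp'
            have h3 : qS ρ' y = qS ρ y := qS_compat_ge ρ ρ' x hc hxy.le
            have h4 : qS ρ' y < k - 1 := by omega
            simp [h2, h4, hρy, hρ'y]
          · -- x > p, max = x
            rcases lt_or_ge y x with hxy | hxy
            · -- p ≤ y < x
              have h1 : qS ρ y ≤ qS ρ p := qS_mono ρ hρ hyp
              have h3 : qS ρ y = qS ρ' y + 1 := qS_compat_lt ρ ρ' hρ' x hc hxy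
              have h2 : qS ρ y < k := by omega
              have h4 : qS ρ' y < k - 1 := by omega
              simp [h2, h4, hρy, hρ'y]
            · -- y > x (y = x excluded)
              have hxy' : x < y := by
                by_contra hno
                push_neg at hno
                have hyeq : y = x := le_antisymm hno hxy
                exact hy (by rw [hyeq, max_eq_left hxp.le])
              have h1 : qS ρ y + 1 ≤ qS ρ x := qS_strict ρ hρ hxy' hρy
              have h1' : qS ρ x ≤ qS ρ p := qS_mono ρ hρ hxp.le
              have h2 : qS ρ y < k := by omega
              have h3 : qS ρ' y = qS ρ y := qS_compat_ge ρ ρ' x hc hxy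
              have h4 : qS ρ' y < k - 1 := by omega
              simp [h2, h4, hρy, hρ'y]
    · simp only [Bool.not_eq_true] at hρy
      have hyx : y ≠ x := by intro e; rw [e, hx] at hρy; exact absurd hρy (by simp)
      have hρ'y : ρ' y = false := (heq y hyx).symm.trans hρy
      rw [hρy, hρ'y]
      split_ifs <;> rfl
end
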